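/- Let X, V, W, Y be real Banach spaces and D ⊆ X × V. Fix ρ > 0, α > 0, τ > 0, m, o, r, q ∈ [1,∞), x₀ ∈ X, u₀ ∈ V, define the misfit 𝒮((w,y₁),(w',y₂)) := (ρ/m)‖w − w'‖_W^m + (1/o)‖y₁ − y₂‖_Y^o, the regularizer R₂(x,u) := (1/r)‖x − x₀‖^r + (1/q)‖u − u₀‖^q, and C_S := max{2^{m−1}, 2^{o−1}}. Let A : X × V → W and C : V → Y be Fréchet differentiable at (x_k,u_k) ∈ D and u_k respectively, define the linearized all-at-once operator 𝐋(x,u) := (A(x_k,u_k) + A'(x_k,u_k)(x − x_k, u − u_k), C(u_k) + C'(u_k)(u − u_k)), and write 𝐅(x,u) := (A(x,u), C(u)). Let (x†,u†) ∈ D satisfy A(x†,u†) = 0 and C(u†) = y, and let yδ ∈ Y with ‖y − yδ‖ ≤ δ, δ ≥ 0. Assume: (i) (x_{k+1},u_{k+1}) minimizes 𝒮(𝐋(x,u),(0,yδ)) + α R₂(x,u) over D; (ii) 𝒮(𝐋(x†,u†), 𝐅(x†,u†)) ≤ c_tc·𝒮(𝐅(x†,u†), 𝐅(x_k,u_k))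 with c_tc ≥ 0; (iii) 𝒮(𝐅(x_k,u_k),(0,yδ)) ≥ τ δ^o/o; and (iv) 𝒮(𝐋(x_{k+1},u_{k+1}),(0,yδ)) ≥ σ̲·𝒮(𝐅(x_k,u_k),(0,yδ)) with σ̲ ≥ C_S² c_tc + C_S(1 + C_S c_tc)/τ. Then R₂(x_{k+1},u_{k+1}) ≤ R₂(x†,u†). -/

import Mathlib

/-!
The misfit `𝒮` is symmetric and satisfies a quasi-triangle inequality with constant `C_S`,
because `(a + b)^p ≤ 2^(p-1) (a^p + b^p)` for `p ≥ 1`. Going from `𝐋(x†,u†)` to `(0,yδ)`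
through `𝐅(x†,u†)`, then using the tangential cone condition and going from `𝐅(x†,u†)` to
`𝐅(x_k,u_k)` through `(0,yδ)`, bounds `𝒮(𝐋(x†,u†),(0,yδ))` by `C_S² c_tc + C_S(1 + C_S c_tc)/τ`
times `𝒮(𝐅(x_k,u_k),(0,yδ))`: the discrepancy principle not being met makes the noise term
`𝒮(𝐅(x†,u†),(0,yδ)) ≤ δ^o/o` at most `1/τ` times that misfit. By the choice of `σ̲`, the
linearized misfit of `(x†,u†)` is then no larger than that of the new iterate, and comparing
the two in the minimality of the new iterate leaves `R₂(x_{k+1},u_{k+1}) ≤ R₂(x†,u†)`.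
-/

open scoped NNReal

theorem Real.rpow_add_le_mul_rpow_add_rpow {a b p : ℝ} (ha : 0 ≤ a) (hb : 0 ≤ b) (hp : 1 ≤ p) :
    (a + b) ^ p ≤ 2 ^ (p - 1) * (a ^ p + b ^ p) := by
  lift a to ℝ≥0 using ha
  lift b to ℝ≥0 using hb
  exact_mod_cast NNReal.rpow_add_le_mul_rpow_add_rpow a b hp

theorem norm_sub_rpow_le_mul_add {E : Type*} [SeminormedAddCommGroup E] (a b c : E) {p : ℝ}
    (hp : 1 ≤ p) : ‖a - c‖ ^ p ≤ 2 ^ (p - 1) * (‖a - b‖ ^ p + ‖b - c‖ ^ p) :=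
  calc ‖a - c‖ ^ p ≤ (‖a - b‖ + ‖b - c‖) ^ p :=
        Real.rpow_le_rpow (norm_nonneg _) (norm_sub_le_norm_sub_add_norm_sub a b c) (by linarith)
    _ ≤ 2 ^ (p - 1) * (‖a - b‖ ^ p + ‖b - c‖ ^ p) :=
        Real.rpow_add_le_mul_rpow_add_rpow (norm_nonneg _) (norm_nonneg _) hp

/-- The misfit `𝒮` of the paper, with weight `ρ` on the first component. -/
noncomputable def powerMisfit {E F : Type*} [SeminormedAddCommGroup E] [SeminormedAddCommGroup F]
    (ρ m o : ℝ) (p p' : E × F) : ℝ :=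
  ρ / m * ‖p.1 - p'.1‖ ^ m + 1 / o * ‖p.2 - p'.2‖ ^ o

namespace powerMisfit

variable {E F : Type*} [SeminormedAddCommGroup E] [SeminormedAddCommGroup F] {ρ m o : ℝ}

theorem nonneg (hρ : 0 ≤ ρ) (hm : 0 ≤ m) (ho : 0 ≤ o) (p p' : E × F) :
    0 ≤ powerMisfit ρ m o p p' := by
  unfold powerMisfit
  positivity

theorem comm (p p' : E × F) : powerMisfit ρ m o p p' = powerMisfit ρ m o p' p := by
  simp only [powerMisfit, norm_sub_rev]

theorem le_mul_add (hρ : 0 ≤ ρ) (hm : 1 ≤ m) (ho : 1 ≤ o) (a b c : E × F) :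
    powerMisfit ρ m o a c ≤
      max (2 ^ (m - 1)) (2 ^ (o - 1)) * (powerMisfit ρ m o a b + powerMisfit ρ m o b c) := by
  set K : ℝ := max (2 ^ (m - 1)) (2 ^ (o - 1))
  have hfst : ‖a.1 - c.1‖ ^ m ≤ K * (‖a.1 - b.1‖ ^ m + ‖b.1 - c.1‖ ^ m) :=
    (norm_sub_rpow_le_mul_add _ _ _ hm).trans
      (mul_le_mul_of_nonneg_right (le_max_left _ _) (by positivity))
  have hsnd : ‖a.2 - c.2‖ ^ o ≤ K * (‖a.2 - b.2‖ ^ o + ‖b.2 - c.2‖ ^ o) :=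
    (norm_sub_rpow_le_mul_add _ _ _ ho).trans
      (mul_le_mul_of_nonneg_right (le_max_right _ _) (by positivity))
  have hρm : 0 ≤ ρ / m := div_nonneg hρ (by linarith)
  have ho' : 0 ≤ 1 / o := by rw [one_div_nonneg]; linarith
  unfold powerMisfit
  linarith [mul_le_mul_of_nonneg_left hfst hρm, mul_le_mul_of_nonneg_left hsnd ho']

theorem same_fst (hm : m ≠ 0) (e : E) (f f' : F) :
    powerMisfit ρ m o (e, f) (e, f') = 1 / o * ‖f - f'‖ ^ o := by
  simp [powerMisfit, Real.zero_rpow hm]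

end powerMisfit

theorem le_mul_of_tangential_cone {P : Type*} (S : P → P → ℝ) {K c τ : ℝ}
    (hK : 0 ≤ K) (hc : 0 ≤ c) (hτ : 0 < τ) (hS_comm : ∀ a b, S a b = S b a)
    (hS_tri : ∀ a b c, S a c ≤ K * (S a b + S b c)) {l f fk z : P}
    (htc : S l f ≤ c * S f fk) (hnoise : τ * S f z ≤ S fk z) :
    S l z ≤ (K ^ 2 * c + K * (1 + K * c) / τ) * S fk z := by
  have hf : S f z ≤ S fk z / τ := by rw [le_div_iff₀ hτ]; linarith
  have hcone : S l f ≤ c * (K * (S f z + S fk z)) := by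
    refine htc.trans (mul_le_mul_of_nonneg_left ?_ hc)
    simpa only [hS_comm z fk] using hS_tri f z fk
  calc S l z ≤ K * (S l f + S f z) := hS_tri l f z
    _ ≤ K * (c * (K * (S fk z / τ + S fk z)) + S fk z / τ) := by
        gcongr
        exact hcone.trans (by gcongr)
    _ = (K ^ 2 * c + K * (1 + K * c) / τ) * S fk z := by ring

theorem allAtOnce_IRGNM_R2_bound_general
    {X V W Y : Type*}
    [NormedAddCommGroup X] [NormedAddCommGroup V]
    [NormedAddCommGroup W] [NormedAddCommGroup Y]
    (A : X × V → W) (C : V → Y) (D : Set (X × V))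
    (ρ α τ m o ctc σ CS : ℝ)
    (hρ : 0 < ρ) (hα : 0 < α) (hτ : 0 < τ)
    (hm : 1 ≤ m) (ho : 1 ≤ o) (hctc : 0 ≤ ctc)
    (hCS : CS = max ((2 : ℝ) ^ (m - 1)) ((2 : ℝ) ^ (o - 1)))
    (R₂ : X × V → ℝ)
    (S : (W × Y) → (W × Y) → ℝ)
    (hS : ∀ p q' : W × Y,
      S p q' = ρ / m * ‖p.1 - q'.1‖ ^ m + 1 / o * ‖p.2 - q'.2‖ ^ o)
    (xk : X) (uk : V)
    (Lop : X × V → W × Y)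
    (F : X × V → W × Y) (hF : ∀ p : X × V, F p = (A p, C p.2))
    (xdag : X) (udag : V) (hdagD : (xdag, udag) ∈ D)
    (hAdag : A (xdag, udag) = 0) (y : Y) (hCdag : C udag = y)
    (yδ : Y) (δ : ℝ) (hnoise : ‖y - yδ‖ ≤ δ)
    (xk1 : X) (uk1 : V)
    (hmin : ∀ p ∈ D,
      S (Lop (xk1, uk1)) ((0 : W), yδ) + α * R₂ (xk1, uk1)
        ≤ S (Lop p) ((0 : W), yδ) + α * R₂ p)
    (htc : S (Lop (xdag, udag)) (F (xdag, udag))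
        ≤ ctc * S (F (xdag, udag)) (F (xk, uk)))
    (hdisc : τ * δ ^ o / o ≤ S (F (xk, uk)) ((0 : W), yδ))
    (hσ : CS ^ 2 * ctc + CS * (1 + CS * ctc) / τ ≤ σ)
    (hsigma : σ * S (F (xk, uk)) ((0 : W), yδ)
        ≤ S (Lop (xk1, uk1)) ((0 : W), yδ)) :
    R₂ (xk1, uk1) ≤ R₂ (xdag, udag) := by
  obtain rfl : S = powerMisfit ρ m o := funext₂ hS
  obtain rfl := hCS
  have hm₀ : 0 < m := by linarith
  have ho₀ : 0 < o := by linarith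
  have hFdag : F (xdag, udag) = ((0 : W), y) := by rw [hF, hAdag, hCdag]
  have hnoise_le : τ * powerMisfit ρ m o (F (xdag, udag)) (0, yδ)
      ≤ powerMisfit ρ m o (F (xk, uk)) (0, yδ) := by
    rw [hFdag, powerMisfit.same_fst hm₀.ne']
    have : ‖y - yδ‖ ^ o ≤ δ ^ o := Real.rpow_le_rpow (norm_nonneg _) hnoise ho₀.le
    calc τ * (1 / o * ‖y - yδ‖ ^ o) ≤ τ * δ ^ o / o := by
          rw [mul_div_assoc, one_div_mul_eq_div]; gcongr
      _ ≤ _ := hdisc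
  have hlin_dag := le_mul_of_tangential_cone _ (by positivity) hctc hτ powerMisfit.comm
    (powerMisfit.le_mul_add hρ.le hm ho) htc hnoise_le
  have hres_nonneg := powerMisfit.nonneg hρ.le hm₀.le ho₀.le (F (xk, uk)) (0, yδ)
  have hlin_le : powerMisfit ρ m o (Lop (xdag, udag)) (0, yδ)
      ≤ powerMisfit ρ m o (Lop (xk1, uk1)) (0, yδ) :=
    hlin_dag.trans ((mul_le_mul_of_nonneg_right hσ hres_nonneg).trans hsigma)
  exact le_of_mul_le_mul_left (by linarith [hmin _ hdagD]) hα

/-- One step of the all-at-once IRGNM with regularization of both parameter and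
state via `R₂(x,u) = (1/r)‖x−x₀‖^r + (1/q)‖u−u₀‖^q` (boundedness estimate (3.9)
in Proposition 3.1): if the new iterate minimizes the linearized misfit plus
`αR₂` over `D`, the tangential cone estimate holds, the discrepancy principle is
not yet reached, and the inexact-Newton lower bound holds with
`σ̲ ≥ C_S²c_tc + C_S(1+C_Sc_tc)/τ`, then `R₂(x_{k+1},u_{k+1}) ≤ R₂(x†,u†)`. -/
theorem allAtOnce_IRGNM_R2_bound
    {X V W Y : Type*}
    [NormedAddCommGroup X] [NormedSpace ℝ X] [CompleteSpace X]
    [NormedAddCommGroup V] [NormedSpace ℝ V] [CompleteSpace V]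
    [NormedAddCommGroup W] [NormedSpace ℝ W] [CompleteSpace W]
    [NormedAddCommGroup Y] [NormedSpace ℝ Y] [CompleteSpace Y]
    (A : X × V → W) (C : V → Y) (D : Set (X × V))
    (ρ α τ m o r q ctc σ CS : ℝ)
    (hρ : 0 < ρ) (hα : 0 < α) (hτ : 0 < τ)
    (hm : 1 ≤ m) (ho : 1 ≤ o) (hr : 1 ≤ r) (hq : 1 ≤ q) (hctc : 0 ≤ ctc)
    (hCS : CS = max ((2 : ℝ) ^ (m - 1)) ((2 : ℝ) ^ (o - 1)))
    (x₀ : X) (u₀ : V)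
    (R₂ : X × V → ℝ)
    (hR₂ : ∀ p : X × V, R₂ p = 1 / r * ‖p.1 - x₀‖ ^ r + 1 / q * ‖p.2 - u₀‖ ^ q)
    (S : (W × Y) → (W × Y) → ℝ)
    (hS : ∀ p q' : W × Y,
      S p q' = ρ / m * ‖p.1 - q'.1‖ ^ m + 1 / o * ‖p.2 - q'.2‖ ^ o)
    (xk : X) (uk : V) (hkD : (xk, uk) ∈ D)
    (A' : X × V →L[ℝ] W) (C' : V →L[ℝ] Y)
    (hA' : HasFDerivAt A A' (xk, uk)) (hC' : HasFDerivAt C C' uk)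
    (Lop : X × V → W × Y)
    (hLop : ∀ p : X × V,
      Lop p = (A (xk, uk) + A' (p.1 - xk, p.2 - uk), C uk + C' (p.2 - uk)))
    (F : X × V → W × Y) (hF : ∀ p : X × V, F p = (A p, C p.2))
    (xdag : X) (udag : V) (hdagD : (xdag, udag) ∈ D)
    (hAdag : A (xdag, udag) = 0) (y : Y) (hCdag : C udag = y)
    (yδ : Y) (δ : ℝ) (hδ : 0 ≤ δ) (hnoise : ‖y - yδ‖ ≤ δ)
    (xk1 : X) (uk1 : V) (hk1D : (xk1, uk1) ∈ D)
    (hmin : ∀ p ∈ D,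
      S (Lop (xk1, uk1)) ((0 : W), yδ) + α * R₂ (xk1, uk1)
        ≤ S (Lop p) ((0 : W), yδ) + α * R₂ p)
    (htc : S (Lop (xdag, udag)) (F (xdag, udag))
        ≤ ctc * S (F (xdag, udag)) (F (xk, uk)))
    (hdisc : τ * δ ^ o / o ≤ S (F (xk, uk)) ((0 : W), yδ))
    (hσ : CS ^ 2 * ctc + CS * (1 + CS * ctc) / τ ≤ σ)
    (hsigma : σ * S (F (xk, uk)) ((0 : W), yδ)
        ≤ S (Lop (xk1, uk1)) ((0 : W), yδ)) :
    R₂ (xk1, uk1) ≤ R₂ (xdag, udag) :=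
  allAtOnce_IRGNM_R2_bound_general A C D ρ α τ m o ctc σ CS hρ hα hτ hm ho hctc hCS R₂ S hS xk uk
    Lop F hF xdag udag hdagD hAdag y hCdag yδ δ hnoise xk1 uk1 hmin htc hdisc hσ hsigma
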